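/- arXiv:2103.00855 — 2 statements merged into one kernel-verified Lean document; each statement's English description precedes it below -/
import Mathlib

section
/- Let V be a vector space over a field K. The space Hom^{fr}_V(1,1) of finite-rank endomorphisms of V contains an element I such that the contraction t_{1,2}(I * f) = f for all finite-rank f ∈ Hom^{fr}_V(1,1) if and only if V is finite-dimensional; in that case I = Id_V. -/
/-- `Hom^{fr}_V(1,1)`, the finite-rank endomorphisms of `V`, contains an element `I` which
is a unit for the contraction `t_{1,2}` (on `Hom^{fr}_V(1,1)` the contraction
`t_{1,2}(I * f)` is the composition `I ∘ f`) if and only if `V` is finite-dimensional;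
in that case `I = Id_V`. -/
theorem homfr_unit_iff_finiteDimensional (K V : Type*) [Field K] [AddCommGroup V]
    [Module K V] :
    ((∃ I : V →ₗ[K] V, Module.Finite K (LinearMap.range I) ∧
        ∀ f : V →ₗ[K] V, Module.Finite K (LinearMap.range f) → I ∘ₗ f = f) ↔
      FiniteDimensional K V) ∧
    (∀ I : V →ₗ[K] V, Module.Finite K (LinearMap.range I) →
      (∀ f : V →ₗ[K] V, Module.Finite K (LinearMap.range f) → I ∘ₗ f = f) →
      FiniteDimensional K V → I = LinearMap.id) := by
  -- Key step: any such unit `I` fixes every vector.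
  have key : ∀ I : V →ₗ[K] V,
      (∀ f : V →ₗ[K] V, Module.Finite K (LinearMap.range f) → I ∘ₗ f = f) →
      ∀ v : V, I v = v := by
    intro I hI v
    rcases eq_or_ne v 0 with rfl | hv
    · simp
    · obtain ⟨φ, hφ⟩ : ∃ φ : Module.Dual K V, φ v ≠ 0 := by
        by_contra h
        push_neg at h
        exact hv ((Module.forall_dual_apply_eq_zero_iff K v).mp h)
      set f : V →ₗ[K] V := φ.smulRight v with hf
      have hrange : LinearMap.range f ≤ K ∙ v := by
        rintro x ⟨y, rfl⟩
        exact Submodule.mem_span_singleton.mpr ⟨φ y, rfl⟩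
      have hfin : Module.Finite K (LinearMap.range f) := by
        have : FiniteDimensional K (K ∙ v) := inferInstance
        exact Submodule.finiteDimensional_of_le hrange
      have hcomp := hI f hfin
      have := congrArg (fun g : V →ₗ[K] V => g v) hcomp
      simp only [LinearMap.comp_apply, hf, LinearMap.smulRight_apply, map_smul] at this
      have := smul_right_injective V hφ this
      exact this
  constructor
  · constructor
    · rintro ⟨I, hIfin, hI⟩
      have hId : ∀ v, I v = v := key I hI
      have hsurj : Function.Surjective I := fun v => ⟨v, hId v⟩
      have : LinearMap.range I = ⊤ := LinearMap.range_eq_top.mpr hsurj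
      rw [this] at hIfin
      exact Module.Finite.of_surjective (Submodule.topEquiv (R := K) (M := V)).toLinearMap
        (Submodule.topEquiv.surjective)
    · intro h
      refine ⟨LinearMap.id, ?_, fun f _ => LinearMap.id_comp f⟩
      infer_instance
  · intro I _ hI _
    ext v
    exact key I hI v
end

section
/- Let V be a vector space and suppose I ∈ V* ⊗ V (viewed as a finite-rank endomorphism of V) satisfies t_{1,2}(I ⊗ g) = g for every rank-one g = v ⊗ λ ∈ V ⊗ V* with λ(v) = 1. Then every nonzero v ∈ V lies in the image of I, hence V ⊆ Im(I) and V is finite-dimensional. -/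
/-- Suppose `I` is a finite-rank endomorphism of `V` such that the contraction
`t_{1,2}(I ⊗ g)` equals `g` for every rank-one `g = v ⊗ λ` with `λ(v) = 1`
(the contraction corresponding to the endomorphism `u ↦ λ(u) • I(v)`, and `g` to
`u ↦ λ(u) • v`).  Then every nonzero `v ∈ V` lies in the image of `I`, hence
`V ⊆ Im(I)` and `V` is finite-dimensional. -/
theorem unit_forces_finiteDimensional (K V : Type*) [Field K] [AddCommGroup V] [Module K V]
    (I : V →ₗ[K] V) (hI : Module.Finite K (LinearMap.range I))
    (h : ∀ (v : V) (lam : Module.Dual K V), lam v = 1 →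
      ∀ u : V, lam u • I v = lam u • v) :
    (∀ v : V, v ≠ 0 → v ∈ LinearMap.range I) ∧ FiniteDimensional K V := by
  have key : ∀ v : V, v ≠ 0 → v ∈ LinearMap.range I := by
    intro v hv
    obtain ⟨lam, hlam⟩ : ∃ lam : Module.Dual K V, lam v ≠ 0 := by
      by_contra hc
      push_neg at hc
      exact hv ((Module.forall_dual_apply_eq_zero_iff K v).mp hc)
    set lam' := (lam v)⁻¹ • lam with hlam'
    have h1 : lam' v = 1 := by
      simp [hlam', inv_mul_cancel₀ hlam]
    have := h v lam' h1 v
    rw [h1, one_smul, one_smul] at this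
    exact ⟨v, this⟩
  refine ⟨key, ?_⟩
  have : LinearMap.range I = ⊤ := by
    rw [eq_top_iff]
    intro v _
    by_cases hv : v = 0
    · simp [hv]
    · exact key v hv
  exact Module.Finite.of_surjective (LinearMap.range I).subtype
    (fun v => by
      by_cases hv : v = 0
      · exact ⟨0, by simp [hv]⟩
      · exact ⟨⟨v, key v hv⟩, rfl⟩)
end
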